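/- arXiv:1802.07010 — 2 statements merged into one kernel-verified Lean document; each statement's English description precedes it below -/
import Mathlib

section
/- The expected value of U^n satisfies lim_{n→∞} (1/n) log E(U^n) = 1 − R. -/
open MeasureTheory ProbabilityTheory Filter Set Topology
open scoped ENNReal

/-!
By the tail-sum formula and independence, `E Uⁿ = ∑_{k < N} ((N - k)/N)^M = ∑_{j=1}^{N} (j/N)^M`
with `N = qⁿ` and `M = ⌊q^{nR}⌋`. Comparing this Riemann sum with `∫₀ᴺ (x/N)^M dx = N/(M+1)`
pins it between `N/(M+1)` and `N/(M+1) + 1`, so `E Uⁿ` is within a factor `2` of `q^{n(1-R)}`.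
-/

/-- `(1/n)·log_q` of a sequence of probabilities (or expectations), valued in the
extended reals so that `log 0 = ⊥`. -/
noncomputable def rateSeq (q : ℕ) (p : ℕ → ℝ≥0∞) (n : ℕ) : EReal :=
  ((((n : ℝ) * Real.log q)⁻¹ : ℝ) : EReal) * ENNReal.log (p n)

theorem integral_div_pow_eq {N : ℝ} (hN : N ≠ 0) (M : ℕ) :
    ∫ x in (0 : ℝ)..N, (x / N) ^ M = N / (M + 1) := by
  rw [intervalIntegral.integral_comp_div (fun x => x ^ M) hN, zero_div, div_self hN,
    integral_pow]
  simp [div_eq_mul_inv]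

theorem monotoneOn_div_pow (N M : ℕ) :
    MonotoneOn (fun x : ℝ => (x / N) ^ M) (Icc 0 (0 + N)) := fun x hx _ _ hxy =>
  pow_le_pow_left₀ (div_nonneg hx.1 N.cast_nonneg) (by gcongr) M

theorem div_succ_le_sum_pow_div (N M : ℕ) :
    (N : ℝ) / (M + 1) ≤ ∑ j ∈ Finset.range N, (((j : ℝ) + 1) / N) ^ M := by
  rcases N.eq_zero_or_pos with rfl | hN
  · simp
  have := (monotoneOn_div_pow N M).integral_le_sum
  rw [zero_add, integral_div_pow_eq (by positivity)] at this
  simpa using this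

theorem sum_pow_div_le_div_succ_add_one (N M : ℕ) :
    ∑ j ∈ Finset.range N, (((j : ℝ) + 1) / N) ^ M ≤ (N : ℝ) / (M + 1) + 1 := by
  rcases N.eq_zero_or_pos with rfl | hN
  · simp
  have hle := (monotoneOn_div_pow N M).sum_le_integral
  rw [zero_add, integral_div_pow_eq (by positivity)] at hle
  simp only [zero_add] at hle
  have hshift := Finset.sum_range_succ' (fun j : ℕ => ((j : ℝ) / N) ^ M) N
  rw [Finset.sum_range_succ] at hshift
  push_cast at hshift
  rw [div_self (by positivity), one_pow] at hshift
  have h0 : (0 : ℝ) ≤ ((0 : ℕ) / (N : ℝ)) ^ M := by positivity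
  linarith

theorem sum_pow_div_mem_Icc {N M : ℕ} {x : ℝ} (hx : 1 ≤ x) (hMx : M ≤ x) (hxM : x < M + 1)
    (hxN : x ≤ N) :
    ∑ j ∈ Finset.range N, (((j : ℝ) + 1) / N) ^ M ∈ Icc (2⁻¹ * (N / x)) (2 * (N / x)) := by
  have hx0 : 0 < x := by linarith
  have hNx : 1 ≤ N / x := (one_le_div hx0).2 hxN
  constructor
  · calc 2⁻¹ * (N / x) = N / (2 * x) := by field_simp
      _ ≤ N / (M + 1) := by gcongr; linarith
      _ ≤ _ := div_succ_le_sum_pow_div N M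
  · calc _ ≤ (N : ℝ) / (M + 1) + 1 := sum_pow_div_le_div_succ_add_one N M
      _ ≤ N / x + N / x := by gcongr
      _ = 2 * (N / x) := by ring

theorem tendsto_inv_mul_log_of_mem_Icc {q c L : ℝ} (hq : 1 < q) (hc : 0 < c) {a : ℕ → ℝ}
    (ha : ∀ n : ℕ, a n ∈ Icc (c⁻¹ * q ^ (n * L)) (c * q ^ (n * L))) :
    Tendsto (fun n : ℕ => ((n : ℝ) * Real.log q)⁻¹ * Real.log (a n)) atTop (𝓝 L) := by
  have hlogq : 0 < Real.log q := Real.log_pos hq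
  have hq0 : 0 < q := by linarith
  set ε : ℕ → ℝ := fun n => ((n : ℝ) * Real.log q)⁻¹
  have hε : Tendsto ε atTop (𝓝 0) :=
    (tendsto_natCast_atTop_atTop.atTop_mul_const hlogq).inv_tendsto_atTop
  have hlog : ∀ n : ℕ, Real.log (a n) ∈
      Icc (n * L * Real.log q - Real.log c) (n * L * Real.log q + Real.log c) := by
    intro n
    have hpow : 0 < q ^ (n * L) := Real.rpow_pos_of_pos hq0 _
    have hlog_pow : Real.log (q ^ (n * L)) = n * L * Real.log q := Real.log_rpow hq0 _
    obtain ⟨hlo, hhi⟩ := ha n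
    have ha0 : 0 < a n := lt_of_lt_of_le (by positivity) hlo
    constructor
    · have := Real.log_le_log (by positivity) hlo
      rw [Real.log_mul (by positivity) hpow.ne', Real.log_inv, hlog_pow] at this
      linarith
    · have := Real.log_le_log ha0 hhi
      rw [Real.log_mul hc.ne' hpow.ne', hlog_pow] at this
      linarith
  have hεL : ∀ n : ℕ, 1 ≤ n → ε n * (n * L * Real.log q) = L := fun n hn => by
    have : (0 : ℝ) < n := by exact_mod_cast hn
    simp only [ε]
    field_simp
  refine tendsto_of_tendsto_of_tendsto_of_le_of_le' (g := fun n => L - Real.log c * ε n)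
    (h := fun n => L + Real.log c * ε n) (by simpa using (hε.const_mul _).const_sub L)
    (by simpa using (hε.const_mul _).const_add L) ?_ ?_
  all_goals
    filter_upwards [eventually_ge_atTop 1] with n hn
    have hεn : 0 ≤ ε n := inv_nonneg.2 (mul_nonneg n.cast_nonneg hlogq.le)
  · calc L - Real.log c * ε n = ε n * (n * L * Real.log q - Real.log c) := by
          rw [mul_sub, hεL n hn]; ring
      _ ≤ _ := mul_le_mul_of_nonneg_left (hlog n).1 hεn
  · calc _ ≤ ε n * (n * L * Real.log q + Real.log c) :=
          mul_le_mul_of_nonneg_left (hlog n).2 hεn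
      _ = L + Real.log c * ε n := by rw [mul_add, hεL n hn]; ring

theorem rateSeq_ofReal {q : ℕ} {a : ℕ → ℝ} {n : ℕ} (ha : 0 < a n) :
    rateSeq q (fun n => ENNReal.ofReal (a n)) n =
      (((n * Real.log q)⁻¹ * Real.log (a n) : ℝ) : EReal) := by
  rw [rateSeq, ENNReal.log_ofReal_of_pos ha, EReal.coe_mul]

section MinimumOfUniforms

variable {Ω : Type*} [MeasurableSpace Ω] {μ : Measure Ω}

theorem lintegral_natCast_eq_sum_measure_lt {f : Ω → ℕ} (hf : Measurable f) {N : ℕ}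
    (hfN : ∀ ω, f ω ≤ N) :
    ∫⁻ ω, (f ω : ℝ≥0∞) ∂μ = ∑ k ∈ Finset.range N, μ {ω | k < f ω} := by
  have hmeas : ∀ k : ℕ, MeasurableSet {ω | k < f ω} := fun k => hf measurableSet_Ioi
  have hsum : ∀ ω, (f ω : ℝ≥0∞) =
      ∑ k ∈ Finset.range N, {ω | k < f ω}.indicator (fun _ => (1 : ℝ≥0∞)) ω := by
    intro ω
    have hfilter : (Finset.range N).filter (· < f ω) = Finset.range (f ω) := by
      ext k
      simp only [Finset.mem_filter, Finset.mem_range]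
      have := hfN ω
      omega
    simp [Set.indicator_apply, Finset.sum_boole, hfilter]
  rw [lintegral_congr hsum,
    lintegral_finsetSum _ fun k _ => measurable_const.indicator (hmeas k)]
  exact Finset.sum_congr rfl fun k _ => lintegral_indicator_one (hmeas k)

theorem measure_lt_eq_of_uniform {X : Ω → ℕ} (hX : Measurable X) {N : ℕ}
    (hval : ∀ ω, X ω ∈ Finset.Icc 1 N)
    (hunif : ∀ j ∈ Finset.Icc 1 N, μ {ω | X ω = j} = (N : ℝ≥0∞)⁻¹) (k : ℕ) :
    μ {ω | k < X ω} = (N - k : ℕ) / N := by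
  have hset : {ω | k < X ω} = X ⁻¹' ↑(Finset.Ioc k N) := by
    ext ω
    have := Finset.mem_Icc.1 (hval ω)
    simp [this.2]
  have hIcc : ∀ j ∈ Finset.Ioc k N, j ∈ Finset.Icc 1 N := fun j hj => by
    simp only [Finset.mem_Ioc, Finset.mem_Icc] at hj ⊢
    omega
  rw [hset, ← sum_measure_preimage_singleton _ fun j _ => hX (measurableSet_singleton j),
    Finset.sum_congr rfl fun j hj =>
      show μ (X ⁻¹' {j}) = (N : ℝ≥0∞)⁻¹ from hunif j (hIcc j hj),
    Finset.sum_const, Nat.card_Ioc, nsmul_eq_mul, div_eq_mul_inv]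

theorem measure_lt_iInf_eq_prod {ι : Type*} [Fintype ι] [Nonempty ι] {X : ι → Ω → ℕ}
    (hind : iIndepFun X μ) (k : ℕ) :
    μ {ω | k < ⨅ i, X i ω} = ∏ i, μ {ω | k < X i ω} := by
  have hset : {ω | k < ⨅ i, X i ω} = ⋂ i, {ω | k < X i ω} := by
    ext ω
    simp only [Set.mem_ofPred_eq, Set.mem_iInter, Nat.lt_iff_add_one_le,
      le_ciInf_iff (OrderBot.bddBelow _)]
  rw [hset, hind.meas_iInter (s := fun i => {ω | k < X i ω}) fun i =>
    ⟨Set.Ioi k, measurableSet_Ioi, rfl⟩]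

theorem lintegral_iInf_eq_of_uniform {ι : Type*} [Fintype ι] [Nonempty ι] {X : ι → Ω → ℕ}
    (hX : ∀ i, Measurable (X i)) (hind : iIndepFun X μ) {N : ℕ}
    (hval : ∀ i ω, X i ω ∈ Finset.Icc 1 N)
    (hunif : ∀ i, ∀ j ∈ Finset.Icc 1 N, μ {ω | X i ω = j} = (N : ℝ≥0∞)⁻¹) :
    ∫⁻ ω, ((⨅ i, X i ω : ℕ) : ℝ≥0∞) ∂μ =
      ENNReal.ofReal (∑ j ∈ Finset.range N, (((j : ℝ) + 1) / N) ^ Fintype.card ι) := by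
  have hle : ∀ ω, ⨅ i, X i ω ≤ N := fun ω =>
    (ciInf_le (OrderBot.bddBelow _) (Classical.arbitrary ι)).trans (Finset.mem_Icc.1 (hval _ ω)).2
  rw [lintegral_natCast_eq_sum_measure_lt (Measurable.iInf hX) hle,
    ENNReal.ofReal_sum_of_nonneg fun j _ => by positivity, ← Finset.sum_range_reflect]
  refine Finset.sum_congr rfl fun k hk => ?_
  have hkN := Finset.mem_range.1 hk
  have hN : (0 : ℝ) < N := by exact_mod_cast k.zero_le.trans_lt hkN
  rw [measure_lt_iInf_eq_prod hind,
    Finset.prod_congr rfl fun i _ => measure_lt_eq_of_uniform (hX i) (hval i) (hunif i) _,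
    Finset.prod_const, Finset.card_univ, show N - (N - 1 - k) = k + 1 by omega,
    ENNReal.ofReal_pow (by positivity), ENNReal.ofReal_div_of_pos hN]
  norm_cast

end MinimumOfUniforms

theorem grand_min_uniform_mean_exponent_general
    {Ω : Type*} [MeasurableSpace Ω] (μ : Measure Ω)
    (q : ℕ) (hq : 2 ≤ q) (R : ℝ) (hR : R ∈ Set.Ioo (0:ℝ) 1)
    (M : ℕ → ℕ) (hM : ∀ n : ℕ, M n = ⌊(q : ℝ) ^ ((n : ℝ) * R)⌋₊)
    (Un : (n : ℕ) → Fin (M n) → Ω → ℕ)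
    (hUnmeas : ∀ n i, Measurable (Un n i))
    (hUnval : ∀ n i ω, Un n i ω ∈ Finset.Icc 1 (q ^ n))
    (hUnunif : ∀ n i, ∀ k ∈ Finset.Icc 1 (q ^ n), μ {ω | Un n i ω = k} = ((q : ℝ≥0∞) ^ n)⁻¹)
    (hUnindep : ∀ n, iIndepFun (Un n) μ)
    (U : ℕ → Ω → ℕ) (hU : ∀ n ω, U n ω = ⨅ i, Un n i ω)
    :
    Filter.Tendsto
      (rateSeq q (fun n => ∫⁻ ω, (U n ω : ℝ≥0∞) ∂μ))
      Filter.atTop (nhds ((1 - R : ℝ) : EReal)) := by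
  obtain ⟨hR0, hR1⟩ := hR
  have hq1 : (1 : ℝ) < q := by exact_mod_cast hq
  set x : ℕ → ℝ := fun n => (q : ℝ) ^ ((n : ℝ) * R)
  have hx1 : ∀ n, 1 ≤ x n := fun n => Real.one_le_rpow hq1.le (by positivity)
  have hM_le : ∀ n, (M n : ℝ) ≤ x n := fun n => hM n ▸ Nat.floor_le (by linarith [hx1 n])
  have hM_lt : ∀ n, x n < M n + 1 := fun n => hM n ▸ Nat.lt_floor_add_one _
  have hxN : ∀ n, x n ≤ ((q ^ n : ℕ) : ℝ) := fun n => by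
    rw [Nat.cast_pow, ← Real.rpow_natCast]
    exact Real.rpow_le_rpow_of_exponent_le hq1.le (mul_le_of_le_one_right n.cast_nonneg hR1.le)
  have hNx : ∀ n, ((q ^ n : ℕ) : ℝ) / x n = (q : ℝ) ^ ((n : ℝ) * (1 - R)) := fun n => by
    rw [Nat.cast_pow, ← Real.rpow_natCast, ← Real.rpow_sub (by positivity)]
    ring_nf
  have : ∀ n, Nonempty (Fin (M n)) := fun n =>
    ⟨⟨0, Nat.succ_lt_succ_iff.1 (by exact_mod_cast (hx1 n).trans_lt (hM_lt n))⟩⟩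
  set s : ℕ → ℝ := fun n => ∑ j ∈ Finset.range (q ^ n), (((j : ℝ) + 1) / (q ^ n : ℕ)) ^ M n
  have hE : ∀ n, ∫⁻ ω, (U n ω : ℝ≥0∞) ∂μ = ENNReal.ofReal (s n) := fun n => by
    simp_rw [hU]
    simpa [s] using lintegral_iInf_eq_of_uniform (hUnmeas n) (hUnindep n) (hUnval n)
      (by simpa using hUnunif n)
  have hs : ∀ n : ℕ, s n ∈ Icc (2⁻¹ * (q : ℝ) ^ ((n : ℝ) * (1 - R)))
      (2 * (q : ℝ) ^ ((n : ℝ) * (1 - R))) := fun n =>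
    hNx n ▸ sum_pow_div_mem_Icc (hx1 n) (hM_le n) (hM_lt n) (hxN n)
  have hs0 : ∀ n, 0 < s n := fun n =>
    lt_of_lt_of_le (mul_pos (by norm_num) (Real.rpow_pos_of_pos (by linarith) _)) (hs n).1
  simp_rw [hE, funext fun n => rateSeq_ofReal (q := q) (hs0 n)]
  exact EReal.tendsto_coe.2 (tendsto_inv_mul_log_of_mem_Icc hq1 two_pos hs)

/-- `lim_n (1/n) log_q E(Uⁿ) = 1 - R`. -/
theorem grand_min_uniform_mean_exponent
    {Ω : Type*} [MeasurableSpace Ω] (μ : Measure Ω) [IsProbabilityMeasure μ]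
    (q : ℕ) (hq : 2 ≤ q) (R : ℝ) (hR : R ∈ Set.Ioo (0:ℝ) 1)
    (M : ℕ → ℕ) (hM : ∀ n : ℕ, M n = ⌊(q : ℝ) ^ ((n : ℝ) * R)⌋₊)
    (Un : (n : ℕ) → Fin (M n) → Ω → ℕ)
    (hUnmeas : ∀ n i, Measurable (Un n i))
    (hUnval : ∀ n i ω, Un n i ω ∈ Finset.Icc 1 (q ^ n))
    (hUnunif : ∀ n i, ∀ k ∈ Finset.Icc 1 (q ^ n), μ {ω | Un n i ω = k} = ((q : ℝ≥0∞) ^ n)⁻¹)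
    (hUnindep : ∀ n, iIndepFun (Un n) μ)
    (U : ℕ → Ω → ℕ) (hU : ∀ n ω, U n ω = ⨅ i, Un n i ω)
    :
    Filter.Tendsto
      (rateSeq q (fun n => ∫⁻ ω, (U n ω : ℝ≥0∞) ∂μ))
      Filter.atTop (nhds ((1 - R : ℝ) : EReal)) :=
  grand_min_uniform_mean_exponent_general μ q hq R hR M hM Un hUnmeas hUnval hUnunif hUnindep U hU
end

section
/- (Channel Coding Theorem with GRAND, beyond capacity.) If the code-book rate exceeds capacity, R > 1 − H, then lim_{n→∞} (1/n) log P(U^n ≤ G_n) = 0, so the probability of an erroneous decoding does not decay exponentially in n, while lim_{n→∞} (1/n) log P(U^n ≥ G_n) = −I^N(1−R) < 0, so the probability that the decoding produced by GRAND is the transmitted code-word decays exponentially in the block length n with success exponent s(R) = I^N(1−R). -/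
open MeasureTheory ProbabilityTheory Filter Set Topology
open scoped ENNReal

/-!
The minimum `U` of `M ≈ q^{nR}` independent uniform guesses on `{1, …, q^n}` lives at the scale
`q^{n(1-R)}`: for a threshold `K = ⌊q^{nt}⌋` one has `P(K < U) = (1 - K/q^n)^M`, which is at most
`exp(-q^{n(R+t-1)}/4)`, superexponentially small, when `t > 1 - R`, and at least
`1 - q^{n(R+t-1)}`, close to one, when `t < 1 - R`. Since `G` is independent of `U`, comparing both
with such thresholds turns `U ≤ G` and `G ≤ U` into the large-deviation events
`(1/n) log G > t`, `< t` and `≤ t`, at the cost of factors of exponential order zero.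
As `H > 1 - R`, the typical value of `(1/n) log G` lies above `1 - R`, so errors are not
exponentially rare, while success has exponent `I^N(t)` for `t` close to `1 - R`. Convexity with
`I^N(H) = 0` and `I^N(0) ≤ H` makes `I^N` finite and antitone on `[0, H]`, so these exponents
converge to `I^N(1 - R)` by continuity.
-/

open ExpGrowth

/-- Mathlib's `ConvexOn` needs an `ℝ`-action on the codomain, which `EReal` lacks. -/
def ERealConvexOn (s : Set ℝ) (f : ℝ → EReal) : Prop :=
  ∀ x ∈ s, ∀ y ∈ s, ∀ a b : ℝ, 0 ≤ a → 0 ≤ b → a + b = 1 →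
    f (a * x + b * y) ≤ (a : EReal) * f x + (b : EReal) * f y

theorem ERealConvexOn.antitoneOn_Icc {s : Set ℝ} {f : ℝ → EReal} {a m : ℝ}
    (hf : ERealConvexOn s f) (hs : Icc a m ⊆ s) (hnn : ∀ x ∈ Icc a m, 0 ≤ f x) (hfm : f m = 0) :
    AntitoneOn f (Icc a m) := by
  intro x hx y hy hxy
  rcases hxy.eq_or_lt with rfl | hxy
  · exact le_rfl
  have hxm : 0 < m - x := by linarith [hy.2]
  have hy' : (m - y) / (m - x) * x + (y - x) / (m - x) * m = y := by field_simp; ring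
  have hm : m ∈ Icc a m := ⟨by linarith [hx.1], le_rfl⟩
  have hconv := hf x (hs hx) m (hs hm) ((m - y) / (m - x)) ((y - x) / (m - x))
    (div_nonneg (by linarith [hy.2]) hxm.le) (div_nonneg (by linarith) hxm.le) (by field_simp; ring)
  rw [hy', hfm, mul_zero, add_zero] at hconv
  refine hconv.trans (mul_le_of_le_one_left (hnn x hx) ?_)
  exact_mod_cast (div_le_one hxm).2 (by linarith)

theorem rateSeq_eq (q : ℕ) (p : ℕ → ℝ≥0∞) :
    rateSeq q p = fun n ↦ (((Real.log q)⁻¹ : ℝ) : EReal) * (ENNReal.log (p n) / n) := by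
  ext n
  rw [rateSeq, mul_inv, EReal.coe_mul, EReal.div_eq_inv_mul, mul_assoc, mul_left_comm,
    EReal.coe_inv (n : ℝ), EReal.coe_natCast]

theorem liminf_rateSeq (q : ℕ) (p : ℕ → ℝ≥0∞) :
    liminf (rateSeq q p) atTop = (((Real.log q)⁻¹ : ℝ) : EReal) * expGrowthInf p := by
  rw [rateSeq_eq, EReal.liminf_const_mul_of_nonneg_of_ne_top _ (EReal.coe_ne_top _), expGrowthInf]
  exact_mod_cast inv_nonneg.2 (Real.log_natCast_nonneg q)

theorem limsup_rateSeq (q : ℕ) (p : ℕ → ℝ≥0∞) :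
    limsup (rateSeq q p) atTop = (((Real.log q)⁻¹ : ℝ) : EReal) * expGrowthSup p := by
  rw [rateSeq_eq, EReal.limsup_const_mul_of_nonneg_of_ne_top _ (EReal.coe_ne_top _), expGrowthSup]
  exact_mod_cast inv_nonneg.2 (Real.log_natCast_nonneg q)

section RateSeq

variable {q : ℕ} {u v : ℕ → ℝ≥0∞}

theorem liminf_rateSeq_le_of_eventually_ge {b : ℝ≥0∞} (hb : b ≠ 0)
    (h : ∀ᶠ n in atTop, b * u n ≤ v n) :
    liminf (rateSeq q u) atTop ≤ liminf (rateSeq q v) atTop := by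
  rw [liminf_rateSeq, liminf_rateSeq]
  exact mul_le_mul_of_nonneg_left (expGrowthInf_of_eventually_ge hb h)
    (by exact_mod_cast inv_nonneg.2 (Real.log_natCast_nonneg q))

theorem limsup_rateSeq_mono (h : u ≤ᶠ[atTop] v) :
    limsup (rateSeq q u) atTop ≤ limsup (rateSeq q v) atTop := by
  rw [limsup_rateSeq, limsup_rateSeq]
  exact mul_le_mul_of_nonneg_left (expGrowthSup_eventually_monotone h)
    (by exact_mod_cast inv_nonneg.2 (Real.log_natCast_nonneg q))

theorem limsup_rateSeq_nonpos (h : ∀ n, u n ≤ 1) : limsup (rateSeq q u) atTop ≤ 0 := by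
  have h1 : expGrowthSup u ≤ 0 :=
    (expGrowthSup_monotone h).trans (expGrowthSup_const one_ne_zero ENNReal.one_ne_top).le
  rw [limsup_rateSeq]
  exact mul_nonpos_of_nonneg_of_nonpos
    (by exact_mod_cast inv_nonneg.2 (Real.log_natCast_nonneg q)) h1

theorem limsup_rateSeq_add_of_expGrowthSup_eq_bot (hv : expGrowthSup v = ⊥) :
    limsup (rateSeq q (u + v)) atTop = limsup (rateSeq q u) atTop := by
  rw [limsup_rateSeq, limsup_rateSeq, expGrowthSup_add, hv, max_bot_right]

end RateSeq

theorem expGrowthSup_eq_bot_of_le_exp_neg_pow {u : ℕ → ℝ≥0∞} {b c : ℝ} (hb : 1 < b) (hc : 0 < c)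
    (hu : ∀ᶠ n in atTop, u n ≤ ENNReal.ofReal (Real.exp (-(c * b ^ n)))) :
    expGrowthSup u = ⊥ := by
  refine (EReal.eq_bot_iff_forall_lt _).2 fun a ↦ ?_
  have hd : 0 < |a| + 1 := by positivity
  refine lt_of_le_of_lt (Eventually.expGrowthSup_le (a := ((a - 1 : ℝ) : EReal)) ?_)
    (EReal.coe_lt_coe_iff.2 (by linarith))
  filter_upwards [hu, (isLittleO_coe_const_pow_of_one_lt (R := ℝ) hb).bound (div_pos hc hd)]
    with n hun hn
  rw [Real.norm_natCast, Real.norm_of_nonneg (pow_nonneg (by linarith) n), div_mul_eq_mul_div,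
    le_div_iff₀ hd] at hn
  rw [← EReal.coe_natCast, ← EReal.coe_mul, EReal.exp_coe]
  refine hun.trans (ENNReal.ofReal_le_ofReal (Real.exp_le_exp.2 ?_))
  nlinarith [neg_abs_le a, n.cast_nonneg (α := ℝ)]

theorem tendsto_of_le_liminf_of_limsup_le_of_continuousWithinAt {α : Type*} {l : Filter α}
    {u : α → EReal} {g : ℝ → EReal} {a b c : ℝ} (hac : a < c) (hcb : c < b)
    (hg : ContinuousWithinAt g (Ioo a b) c) (hlow : ∀ s ∈ Ioo a c, g s ≤ liminf u l)
    (hup : ∀ s ∈ Ioo c b, limsup u l ≤ g s) : Tendsto u l (𝓝 (g c)) := by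
  have : (𝓝[Ioo a c] c).NeBot := right_nhdsWithin_Ioo_neBot hac
  have : (𝓝[Ioo c b] c).NeBot := left_nhdsWithin_Ioo_neBot hcb
  exact tendsto_of_le_liminf_of_limsup_le
    (le_of_tendsto (hg.mono (Ioo_subset_Ioo_right hcb.le)) (eventually_mem_nhdsWithin.mono hlow))
    (ge_of_tendsto (hg.mono (Ioo_subset_Ioo_left hac.le)) (eventually_mem_nhdsWithin.mono hup))

section UniformMinimum

variable {Ω ι : Type*} [MeasurableSpace Ω] {μ : Measure Ω} {N k : ℕ}

theorem measure_lt_of_uniform {f : Ω → ℕ} (hf : Measurable f) (hval : ∀ ω, f ω ∈ Finset.Icc 1 N)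
    (hunif : ∀ j ∈ Finset.Icc 1 N, μ {ω | f ω = j} = (N : ℝ≥0∞)⁻¹) (hN : 0 < N) (hk : k ≤ N) :
    μ {ω | k < f ω} = ENNReal.ofReal (1 - k / N) := by
  have hset : {ω | k < f ω} = ⋃ j ∈ Finset.Ioc k N, {ω | f ω = j} := by
    ext ω
    simpa using fun _ : k < f ω ↦ (Finset.mem_Icc.1 (hval ω)).2
  have hunif' : ∀ j ∈ Finset.Ioc k N, μ {ω | f ω = j} = (N : ℝ≥0∞)⁻¹ := fun j hj ↦
    hunif j (Finset.mem_Icc.2 ⟨by grind, (Finset.mem_Ioc.1 hj).2⟩)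
  rw [hset, measure_biUnion_finset (f := fun j ↦ {ω | f ω = j})
    (fun i _ j _ hij ↦ disjoint_left.2 fun _ hi hj ↦ hij (hi ▸ hj))
    fun j _ ↦ hf (measurableSet_singleton j), Finset.sum_congr rfl hunif', Finset.sum_const,
    Nat.card_Ioc, nsmul_eq_mul, ← ENNReal.ofReal_natCast, ← ENNReal.ofReal_natCast N,
    ← ENNReal.ofReal_inv_of_pos (by exact_mod_cast hN), ← ENNReal.ofReal_mul (Nat.cast_nonneg _),
    Nat.cast_sub hk]
  congr 1
  field_simp

theorem measure_lt_iInf_of_iIndepFun_uniform [Fintype ι] [Nonempty ι] {f : ι → Ω → ℕ}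
    (hf : ∀ i, Measurable (f i)) (hval : ∀ i ω, f i ω ∈ Finset.Icc 1 N)
    (hunif : ∀ i, ∀ j ∈ Finset.Icc 1 N, μ {ω | f i ω = j} = (N : ℝ≥0∞)⁻¹)
    (hind : iIndepFun f μ) (hN : 0 < N) (hk : k ≤ N) :
    μ {ω | k < ⨅ i, f i ω} = ENNReal.ofReal ((1 - k / N) ^ Fintype.card ι) := by
  have hk' : (0 : ℝ) ≤ 1 - k / N := by
    rw [sub_nonneg, div_le_one (by exact_mod_cast hN)]
    exact_mod_cast hk
  have hset : {ω | k < ⨅ i, f i ω} = ⋂ i, {ω | k < f i ω} := by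
    ext ω
    simp only [mem_ofPred_eq, mem_iInter, Nat.lt_iff_add_one_le, le_ciInf_iff (OrderBot.bddBelow _)]
  rw [hset, hind.meas_iInter (s := fun i ↦ {ω | k < f i ω}) fun i ↦ ⟨Ioi k, measurableSet_Ioi, rfl⟩,
    Finset.prod_congr rfl fun i _ ↦ measure_lt_of_uniform (hf i) (hval i) (hunif i) hN hk,
    Finset.prod_const, Finset.card_univ, ENNReal.ofReal_pow hk']

end UniformMinimum

theorem one_sub_pow_le_exp_neg_mul {x : ℝ} (hx : x ≤ 1) (m : ℕ) :
    (1 - x) ^ m ≤ Real.exp (-(m * x)) := by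
  rw [← mul_neg, Real.exp_nat_mul]
  exact pow_le_pow_left₀ (sub_nonneg.2 hx) (Real.one_sub_le_exp_neg x) m

noncomputable def floorRpow (q : ℕ) (t : ℝ) (n : ℕ) : ℕ := ⌊(q : ℝ) ^ ((n : ℝ) * t)⌋₊

section FloorRpow

variable {q n : ℕ} {t : ℝ}

theorem floorRpow_le_rpow : (floorRpow q t n : ℝ) ≤ (q : ℝ) ^ ((n : ℝ) * t) :=
  Nat.floor_le (by positivity)

theorem one_le_floorRpow (hq : 1 ≤ q) (ht : 0 ≤ t) : 1 ≤ floorRpow q t n :=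
  Nat.le_floor (by exact_mod_cast Real.one_le_rpow (by exact_mod_cast hq) (by positivity))

theorem half_rpow_le_floorRpow (hq : 1 ≤ q) (ht : 0 ≤ t) :
    (q : ℝ) ^ ((n : ℝ) * t) / 2 ≤ floorRpow q t n := by
  have h1 : (1 : ℝ) ≤ floorRpow q t n := by exact_mod_cast one_le_floorRpow (n := n) hq ht
  have h2 : (q : ℝ) ^ ((n : ℝ) * t) - 1 < floorRpow q t n := Nat.sub_one_lt_floor _
  linarith

theorem floorRpow_le_pow (hq : 1 ≤ q) (ht : t ≤ 1) : floorRpow q t n ≤ q ^ n := by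
  refine Nat.floor_le_of_le ?_
  rw [Nat.cast_pow, ← Real.rpow_natCast]
  exact Real.rpow_le_rpow_of_exponent_le (by exact_mod_cast hq)
    (mul_le_of_le_one_right n.cast_nonneg ht)

theorem rpow_mul_rpow_div_pow (hq : 0 < q) (R t : ℝ) :
    (q : ℝ) ^ ((n : ℝ) * R) * (q : ℝ) ^ ((n : ℝ) * t) / (q : ℝ) ^ n
      = ((q : ℝ) ^ (R + t - 1)) ^ n := by
  have hq' : (0 : ℝ) < q := by exact_mod_cast hq
  rw [← Real.rpow_add hq', ← Real.rpow_natCast, ← Real.rpow_sub hq', ← Real.rpow_mul_natCast hq'.le]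
  ring_nf

theorem floorRpow_mul_floorRpow_div_le (hq : 0 < q) (R t : ℝ) :
    (floorRpow q R n * floorRpow q t n : ℝ) / (q : ℝ) ^ n ≤ ((q : ℝ) ^ (R + t - 1)) ^ n := by
  rw [← rpow_mul_rpow_div_pow hq]
  gcongr
  · exact floorRpow_le_rpow
  · exact floorRpow_le_rpow

theorem le_floorRpow_mul_floorRpow_div (hq : 1 ≤ q) {R : ℝ} (hR : 0 ≤ R) (ht : 0 ≤ t) :
    ((q : ℝ) ^ (R + t - 1)) ^ n / 4 ≤ (floorRpow q R n * floorRpow q t n : ℝ) / (q : ℝ) ^ n := by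
  rw [← rpow_mul_rpow_div_pow (by omega)]
  calc (q : ℝ) ^ ((n : ℝ) * R) * (q : ℝ) ^ ((n : ℝ) * t) / (q : ℝ) ^ n / 4
      = ((q : ℝ) ^ ((n : ℝ) * R) / 2) * ((q : ℝ) ^ ((n : ℝ) * t) / 2) / (q : ℝ) ^ n := by ring
    _ ≤ _ := by gcongr <;> exact half_rpow_le_floorRpow hq ‹_›

end FloorRpow

section LogbThreshold

variable {q n g : ℕ} {t : ℝ}

theorem floorRpow_lt_of_lt_logb (hq : 1 < q) (hn : 0 < n) (hg : 0 < g)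
    (h : t < (n : ℝ)⁻¹ * Real.logb q g) : floorRpow q t n < g := by
  rw [lt_inv_mul_iff₀ (by exact_mod_cast hn),
    Real.lt_logb_iff_rpow_lt (by exact_mod_cast hq) (by exact_mod_cast hg)] at h
  exact_mod_cast floorRpow_le_rpow.trans_lt h

theorem le_floorRpow_of_logb_lt (hq : 1 < q) (hn : 0 < n) (hg : 0 < g)
    (h : (n : ℝ)⁻¹ * Real.logb q g < t) : g ≤ floorRpow q t n := by
  rw [inv_mul_lt_iff₀ (by exact_mod_cast hn),
    Real.logb_lt_iff_lt_rpow (by exact_mod_cast hq) (by exact_mod_cast hg)] at h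
  exact Nat.le_floor h.le

theorem logb_le_of_le_floorRpow (hq : 1 < q) (hn : 0 < n) (hg : 0 < g)
    (h : g ≤ floorRpow q t n) : (n : ℝ)⁻¹ * Real.logb q g ≤ t := by
  rw [inv_mul_le_iff₀ (by exact_mod_cast hn),
    Real.logb_le_iff_le_rpow (by exact_mod_cast hq) (by exact_mod_cast hg)]
  exact (Nat.cast_le.2 h).trans floorRpow_le_rpow

end LogbThreshold

/-- The tail `P(k < U n)` of the minimum of `M n` independent uniform draws from `{1, …, q^n}`. -/
def MinUniformTail {Ω : Type*} [MeasurableSpace Ω] (μ : Measure Ω) (q : ℕ) (M : ℕ → ℕ)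
    (U : ℕ → Ω → ℕ) : Prop :=
  ∀ n k, k ≤ q ^ n → μ {ω | k < U n ω} = ENNReal.ofReal ((1 - k / (q : ℝ) ^ n) ^ M n)

section Codebook

variable {Ω : Type*} [MeasurableSpace Ω] {μ : Measure Ω} {q : ℕ} {R t : ℝ} {M : ℕ → ℕ}
  {U : ℕ → Ω → ℕ}

theorem measure_floorRpow_lt_le (hq : 1 ≤ q) (hR : 0 ≤ R) (ht0 : 0 ≤ t) (ht1 : t ≤ 1)
    (hM : ∀ n, M n = floorRpow q R n) (hU : MinUniformTail μ q M U) (n : ℕ) :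
    μ {ω | floorRpow q t n < U n ω}
      ≤ ENNReal.ofReal (Real.exp (-(((q : ℝ) ^ (R + t - 1)) ^ n / 4))) := by
  have hqn : (0 : ℝ) < (q : ℝ) ^ n := by positivity
  rw [hU n _ (floorRpow_le_pow hq ht1)]
  refine ENNReal.ofReal_le_ofReal ((one_sub_pow_le_exp_neg_mul ?_ _).trans
    (Real.exp_le_exp.2 (neg_le_neg ?_)))
  · rw [div_le_one hqn]
    exact_mod_cast floorRpow_le_pow hq ht1
  · rw [hM, ← mul_div_assoc]
    exact le_floorRpow_mul_floorRpow_div hq hR ht0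

theorem expGrowthSup_measure_floorRpow_lt (hq : 1 < q) (hR : 0 ≤ R) (ht0 : 0 ≤ t)
    (ht1 : t ≤ 1) (htR : 1 - R < t) (hM : ∀ n, M n = floorRpow q R n)
    (hU : MinUniformTail μ q M U) :
    expGrowthSup (fun n ↦ μ {ω | floorRpow q t n < U n ω}) = ⊥ := by
  refine expGrowthSup_eq_bot_of_le_exp_neg_pow (c := 1 / 4)
    (Real.one_lt_rpow (x := (q : ℝ)) (z := R + t - 1) (by exact_mod_cast hq) (by linarith))
    (by norm_num) (Eventually.of_forall fun n ↦ ?_)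
  rw [one_div_mul_eq_div]
  exact measure_floorRpow_lt_le hq.le hR ht0 ht1 hM hU n

theorem eventually_inv_two_le_measure_le_floorRpow [IsProbabilityMeasure μ] (hq : 1 < q)
    (hR : 0 ≤ R) (ht0 : 0 ≤ t) (ht1 : t ≤ 1) (htR : 1 - R < t) (hM : ∀ n, M n = floorRpow q R n)
    (hU : MinUniformTail μ q M U) (hUmeas : ∀ n, Measurable (U n)) :
    ∀ᶠ n in atTop, 2⁻¹ ≤ μ {ω | U n ω ≤ floorRpow q t n} := by
  have hgrow := tendsto_pow_atTop_atTop_of_one_lt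
    (Real.one_lt_rpow (x := (q : ℝ)) (z := R + t - 1) (by exact_mod_cast hq) (by linarith))
  filter_upwards [hgrow.eventually_ge_atTop 4] with n hn
  have hlt : μ {ω | floorRpow q t n < U n ω} ≤ 2⁻¹ := by
    refine (measure_floorRpow_lt_le hq.le hR ht0 ht1 hM hU n).trans ?_
    rw [← ENNReal.ofReal_ofNat 2, ← ENNReal.ofReal_inv_of_pos two_pos]
    refine ENNReal.ofReal_le_ofReal ?_
    calc Real.exp (-(((q : ℝ) ^ (R + t - 1)) ^ n / 4)) ≤ Real.exp (-1) :=
          Real.exp_le_exp.2 (by linarith)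
      _ ≤ 2⁻¹ := by linarith [Real.exp_neg_one_lt_half]
  have hcompl : {ω | U n ω ≤ floorRpow q t n} = {ω | floorRpow q t n < U n ω}ᶜ := by
    ext ω
    simp
  rw [hcompl, prob_compl_eq_one_sub (measurableSet_lt measurable_const (hUmeas n)),
    ← ENNReal.one_sub_inv_two]
  exact tsub_le_tsub_left hlt 1

theorem eventually_inv_two_le_measure_floorRpow_le (hq : 1 < q) (hR : 0 ≤ R) (ht0 : 0 ≤ t)
    (htR : t < 1 - R) (hM : ∀ n, M n = floorRpow q R n) (hU : MinUniformTail μ q M U) :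
    ∀ᶠ n in atTop, 2⁻¹ ≤ μ {ω | floorRpow q t n ≤ U n ω} := by
  have hdecay := tendsto_pow_atTop_nhds_zero_of_lt_one (by positivity)
    (Real.rpow_lt_one_of_one_lt_of_neg (x := (q : ℝ)) (z := R + t - 1) (by exact_mod_cast hq)
      (by linarith))
  filter_upwards [(tendsto_order.1 hdecay).2 2⁻¹ (by norm_num)] with n hn
  have hK := one_le_floorRpow (n := n) hq.le ht0
  have hqn : (0 : ℝ) < (q : ℝ) ^ n := by positivity
  have hset : {ω | floorRpow q t n ≤ U n ω} = {ω | floorRpow q t n - 1 < U n ω} := by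
    ext ω
    simp only [mem_ofPred_eq]
    omega
  rw [hset, hU n _ ((Nat.sub_le _ 1).trans (floorRpow_le_pow hq.le (by linarith))),
    ← ENNReal.ofReal_ofNat 2, ← ENNReal.ofReal_inv_of_pos two_pos]
  refine ENNReal.ofReal_le_ofReal ?_
  set x : ℝ := (floorRpow q t n - 1 : ℕ) / (q : ℝ) ^ n
  have hx : x ≤ 1 := by
    rw [div_le_one hqn]
    exact_mod_cast (Nat.sub_le _ 1).trans (floorRpow_le_pow hq.le (by linarith))
  have hMx : (M n : ℝ) * x ≤ 2⁻¹ :=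
    calc (M n : ℝ) * x ≤ (M n * floorRpow q t n : ℝ) / (q : ℝ) ^ n := by
          rw [mul_div_assoc]
          exact mul_le_mul_of_nonneg_left (div_le_div_of_nonneg_right
            (by exact_mod_cast Nat.sub_le _ 1) hqn.le) (Nat.cast_nonneg _)
      _ ≤ ((q : ℝ) ^ (R + t - 1)) ^ n := hM n ▸ floorRpow_mul_floorRpow_div_le (by omega) R t
      _ ≤ 2⁻¹ := hn.le
  calc (2⁻¹ : ℝ) ≤ 1 + M n * -x := by linarith
    _ ≤ (1 + -x) ^ M n := one_add_mul_le_pow (by linarith) _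
    _ = (1 - x) ^ M n := by rw [← sub_eq_add_neg]

end Codebook

theorem liminf_rateSeq_le_of_indepFun {Ω : Type*} [MeasurableSpace Ω] {μ : Measure Ω} {q : ℕ}
    {X Y : ℕ → Ω → ℕ} (hXY : ∀ n, IndepFun (X n) (Y n) μ) {A B : ℕ → Set ℕ} {C : ℕ → Set Ω}
    {b : ℝ≥0∞} (hb : b ≠ 0) (hB : ∀ᶠ n in atTop, b ≤ μ (Y n ⁻¹' B n))
    (hC : ∀ᶠ n in atTop, X n ⁻¹' A n ∩ Y n ⁻¹' B n ⊆ C n) :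
    liminf (rateSeq q fun n ↦ μ (X n ⁻¹' A n)) atTop
      ≤ liminf (rateSeq q fun n ↦ μ (C n)) atTop := by
  refine liminf_rateSeq_le_of_eventually_ge hb ?_
  filter_upwards [hB, hC] with n hBn hCn
  calc b * μ (X n ⁻¹' A n) ≤ μ (X n ⁻¹' A n) * μ (Y n ⁻¹' B n) := by
        rw [mul_comm]
        exact mul_le_mul_right hBn _
    _ = μ (X n ⁻¹' A n ∩ Y n ⁻¹' B n) :=
        ((hXY n).measure_inter_preimage_eq_mul _ _ .of_discrete .of_discrete).symm
    _ ≤ μ (C n) := measure_mono hCn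

section Decoding

variable {Ω : Type*} [MeasurableSpace Ω] {μ : Measure Ω} {q : ℕ} {t : ℝ} {G U : ℕ → Ω → ℕ}

theorem liminf_rateSeq_logb_mem_Ioi_le (hq : 1 < q) (hG : ∀ n ω, 0 < G n ω)
    (hGU : ∀ n, IndepFun (G n) (U n) μ)
    (hU : ∀ᶠ n in atTop, 2⁻¹ ≤ μ {ω | U n ω ≤ floorRpow q t n}) :
    liminf (rateSeq q fun n ↦ μ {ω | (n : ℝ)⁻¹ * Real.logb q (G n ω) ∈ Ioi t}) atTop
      ≤ liminf (rateSeq q fun n ↦ μ {ω | U n ω ≤ G n ω}) atTop :=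
  liminf_rateSeq_le_of_indepFun hGU (A := fun n ↦ {g | (n : ℝ)⁻¹ * Real.logb q g ∈ Ioi t})
    (B := fun n ↦ Iic (floorRpow q t n)) (by norm_num) hU <|
    (eventually_gt_atTop 0).mono fun n hn ω hω ↦
      hω.2.trans (floorRpow_lt_of_lt_logb hq hn (hG n ω) hω.1).le

theorem liminf_rateSeq_logb_mem_Iio_le (hq : 1 < q) (hG : ∀ n ω, 0 < G n ω)
    (hGU : ∀ n, IndepFun (G n) (U n) μ)
    (hU : ∀ᶠ n in atTop, 2⁻¹ ≤ μ {ω | floorRpow q t n ≤ U n ω}) :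
    liminf (rateSeq q fun n ↦ μ {ω | (n : ℝ)⁻¹ * Real.logb q (G n ω) ∈ Iio t}) atTop
      ≤ liminf (rateSeq q fun n ↦ μ {ω | G n ω ≤ U n ω}) atTop :=
  liminf_rateSeq_le_of_indepFun hGU (A := fun n ↦ {g | (n : ℝ)⁻¹ * Real.logb q g ∈ Iio t})
    (B := fun n ↦ Ici (floorRpow q t n)) (by norm_num) hU <|
    (eventually_gt_atTop 0).mono fun n hn ω hω ↦
      (le_floorRpow_of_logb_lt hq hn (hG n ω) hω.1).trans hω.2

theorem limsup_rateSeq_le_limsup_logb_mem_Iic (hq : 1 < q) (hG : ∀ n ω, 0 < G n ω)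
    (hU : expGrowthSup (fun n ↦ μ {ω | floorRpow q t n < U n ω}) = ⊥) :
    limsup (rateSeq q fun n ↦ μ {ω | G n ω ≤ U n ω}) atTop
      ≤ limsup (rateSeq q fun n ↦ μ {ω | (n : ℝ)⁻¹ * Real.logb q (G n ω) ∈ Iic t}) atTop := by
  refine (limsup_rateSeq_mono ?_).trans (limsup_rateSeq_add_of_expGrowthSup_eq_bot hU).le
  filter_upwards [eventually_gt_atTop 0] with n hn
  refine (measure_mono (μ := μ) fun ω (hω : G n ω ≤ U n ω) ↦ ?_).trans (measure_union_le _ _)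
  by_cases h : floorRpow q t n < U n ω
  · exact Or.inr h
  · exact Or.inl (logb_le_of_le_floorRpow hq hn (hG n ω) (hω.trans (not_lt.1 h)))

end Decoding

def LDPLowerBound {Ω : Type*} [MeasurableSpace Ω] (μ : Measure Ω) (q : ℕ) (G : ℕ → Ω → ℕ)
    (I : ℝ → EReal) : Prop :=
  ∀ O : Set ℝ, IsOpen O → -(⨅ x ∈ O ∩ Icc (0:ℝ) 1, I x) ≤
    liminf (rateSeq q fun n ↦ μ {ω | (n : ℝ)⁻¹ * Real.logb q (G n ω) ∈ O}) atTop

def LDPUpperBound {Ω : Type*} [MeasurableSpace Ω] (μ : Measure Ω) (q : ℕ) (G : ℕ → Ω → ℕ)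
    (I : ℝ → EReal) : Prop :=
  ∀ F : Set ℝ, IsClosed F →
    limsup (rateSeq q fun n ↦ μ {ω | (n : ℝ)⁻¹ * Real.logb q (G n ω) ∈ F}) atTop
      ≤ -(⨅ x ∈ F ∩ Icc (0:ℝ) 1, I x)

section Grand

variable {Ω : Type*} [MeasurableSpace Ω] {μ : Measure Ω} {q : ℕ} {R H : ℝ} {M : ℕ → ℕ}
  {G U : ℕ → Ω → ℕ} {I : ℝ → EReal}

theorem tendsto_rateSeq_min_le [IsProbabilityMeasure μ] (hq : 1 < q) (hR0 : 0 ≤ R) (hR1 : R ≤ 1)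
    (hM : ∀ n, M n = floorRpow q R n) (hU : MinUniformTail μ q M U)
    (hUmeas : ∀ n, Measurable (U n)) (hG : ∀ n ω, 0 < G n ω) (hGU : ∀ n, IndepFun (G n) (U n) μ)
    (hH : H ∈ Icc (0:ℝ) 1) (hcap : 1 - H < R) (hIH : I H = 0) (hLD : LDPLowerBound μ q G I) :
    Tendsto (rateSeq q fun n ↦ μ {ω | U n ω ≤ G n ω}) atTop (𝓝 0) := by
  refine tendsto_of_le_liminf_of_limsup_le ?_ (limsup_rateSeq_nonpos fun n ↦ prob_le_one)
  have hmem : H ∈ Ioi ((1 - R + H) / 2) ∩ Icc 0 1 := ⟨by simp only [mem_Ioi]; linarith, hH⟩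
  calc (0 : EReal) = -I H := by rw [hIH, neg_zero]
    _ ≤ _ := (EReal.neg_le_neg_iff.2 (iInf₂_le H hmem)).trans (hLD _ isOpen_Ioi)
    _ ≤ _ := liminf_rateSeq_logb_mem_Ioi_le hq hG hGU
        (eventually_inv_two_le_measure_le_floorRpow hq hR0 (by linarith [hH.1])
          (by linarith [hH.2]) (by linarith) hM hU hUmeas)

theorem tendsto_rateSeq_le_min (hq : 1 < q) (hR0 : 0 ≤ R) (hM : ∀ n, M n = floorRpow q R n)
    (hU : MinUniformTail μ q M U) (hG : ∀ n ω, 0 < G n ω) (hGU : ∀ n, IndepFun (G n) (U n) μ)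
    (hRH : 1 - R ∈ Ioo 0 H) (hH : H ≤ 1) (hanti : AntitoneOn I (Icc 0 H))
    (hcont : ContinuousWithinAt I (Ioo 0 H) (1 - R))
    (hLDlow : LDPLowerBound μ q G I) (hLDup : LDPUpperBound μ q G I) :
    Tendsto (rateSeq q fun n ↦ μ {ω | G n ω ≤ U n ω}) atTop (𝓝 (-I (1 - R))) := by
  refine tendsto_of_le_liminf_of_limsup_le_of_continuousWithinAt hRH.1 hRH.2 hcont.neg
    (fun s hs ↦ ?_) (fun t ht ↦ ?_)
  · have hmem : s ∈ Iio ((s + (1 - R)) / 2) ∩ Icc 0 1 :=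
      ⟨by simp only [mem_Iio]; linarith [hs.2], hs.1.le, by linarith [hs.2, hRH.2]⟩
    calc -I s ≤ _ := (EReal.neg_le_neg_iff.2 (iInf₂_le s hmem)).trans (hLDlow _ isOpen_Iio)
      _ ≤ _ := liminf_rateSeq_logb_mem_Iio_le hq hG hGU
          (eventually_inv_two_le_measure_floorRpow_le hq hR0 (by linarith [hs.1, hs.2])
            (by linarith [hs.2]) hM hU)
  · have ht' : t ∈ Icc 0 H := ⟨by linarith [ht.1, hRH.1], ht.2.le⟩
    calc _ ≤ _ := limsup_rateSeq_le_limsup_logb_mem_Iic hq hG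
          (expGrowthSup_measure_floorRpow_lt hq hR0 ht'.1 (by linarith [ht.2]) ht.1 hM hU)
      _ ≤ _ := hLDup _ isClosed_Iic
      _ ≤ -I t := EReal.neg_le_neg_iff.2 <| le_iInf₂ fun x hx ↦
          hanti ⟨hx.2.1, hx.1.trans ht'.2⟩ ht' hx.1

end Grand

theorem grand_channel_coding_beyond_capacity_general
    {Ω : Type*} [MeasurableSpace Ω] (μ : Measure Ω) [IsProbabilityMeasure μ]
    (q : ℕ) (hq : 2 ≤ q) (R : ℝ) (hR : R ∈ Set.Ioo (0:ℝ) 1)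
    (M : ℕ → ℕ) (hM : ∀ n : ℕ, M n = ⌊(q : ℝ) ^ ((n : ℝ) * R)⌋₊)
    (Un : (n : ℕ) → Fin (M n) → Ω → ℕ)
    (hUnmeas : ∀ n i, Measurable (Un n i))
    (hUnval : ∀ n i ω, Un n i ω ∈ Finset.Icc 1 (q ^ n))
    (hUnunif : ∀ n i, ∀ k ∈ Finset.Icc 1 (q ^ n), μ {ω | Un n i ω = k} = ((q : ℝ≥0∞) ^ n)⁻¹)
    (hUnindep : ∀ n, iIndepFun (Un n) μ)
    (U : ℕ → Ω → ℕ) (hU : ∀ n ω, U n ω = ⨅ i, Un n i ω)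
    (G : ℕ → Ω → ℕ)
    (hGval : ∀ n ω, G n ω ∈ Finset.Icc 1 (q ^ n))
    (hGindep : ∀ n, IndepFun (G n) (fun ω i => Un n i ω) μ)
    (IN : ℝ → EReal) (H : ℝ) (hH : H ∈ Set.Ioo (0:ℝ) 1)
    (hINnn : ∀ x ∈ Set.Icc (0:ℝ) 1, 0 ≤ IN x)
    (hINconv : ∀ x ∈ Set.Icc (0:ℝ) 1, ∀ y ∈ Set.Icc (0:ℝ) 1, ∀ a b : ℝ,
      0 ≤ a → 0 ≤ b → a + b = 1 →
      IN (a * x + b * y) ≤ (a : EReal) * IN x + (b : EReal) * IN y)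
    (hINcont : ContinuousOn IN {x | x ∈ Set.Icc (0:ℝ) 1 ∧ IN x ≠ ⊤})
    (hINzero : ∀ x ∈ Set.Icc (0:ℝ) 1, (IN x = 0 ↔ x = H))
    (hIN0 : IN 0 ≤ (H : EReal))
    (hLDlow : ∀ O : Set ℝ, IsOpen O →
      -(⨅ x ∈ O ∩ Set.Icc (0:ℝ) 1, IN x) ≤
        Filter.liminf
          (rateSeq q (fun n => μ {ω | (n : ℝ)⁻¹ * Real.logb q ((G n ω : ℝ)) ∈ O}))
          Filter.atTop)
    (hLDup : ∀ F : Set ℝ, IsClosed F →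
      Filter.limsup
          (rateSeq q (fun n => μ {ω | (n : ℝ)⁻¹ * Real.logb q ((G n ω : ℝ)) ∈ F}))
          Filter.atTop ≤
        -(⨅ x ∈ F ∩ Set.Icc (0:ℝ) 1, IN x))
    (hcap : 1 - H < R) :
    Filter.Tendsto
      (rateSeq q (fun n => μ {ω | U n ω ≤ G n ω}))
      Filter.atTop (nhds (0 : EReal)) ∧
    Filter.Tendsto
      (rateSeq q (fun n => μ {ω | G n ω ≤ U n ω}))
      Filter.atTop (nhds (-(IN (1 - R)))) ∧
    -(IN (1 - R)) < 0 := by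
  obtain ⟨hR0, hR1⟩ := hR
  obtain ⟨hH0, hH1⟩ := hH
  obtain rfl : U = fun n ω ↦ ⨅ i, Un n i ω := funext₂ hU
  have hq1 : 1 < q := by omega
  have hG : ∀ n ω, 0 < G n ω := fun n ω ↦ (Finset.mem_Icc.1 (hGval n ω)).1
  have : ∀ n, Nonempty (Fin (M n)) := fun n ↦ ⟨⟨0, hM n ▸ one_le_floorRpow hq1.le hR0.le⟩⟩
  have hGU : ∀ n, IndepFun (G n) (fun ω ↦ ⨅ i, Un n i ω) μ := fun n ↦
    (hGindep n).comp measurable_id (measurable_of_countable fun v : Fin (M n) → ℕ ↦ ⨅ i, v i)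
  have hUtail : MinUniformTail μ q M fun n ω ↦ ⨅ i, Un n i ω := fun n k hk ↦ by
    simpa using measure_lt_iInf_of_iIndepFun_uniform (hUnmeas n) (hUnval n)
      (by simpa using hUnunif n) (hUnindep n) (by positivity) hk
  have hINH : IN H = 0 := (hINzero H ⟨hH0.le, hH1.le⟩).2 rfl
  have hanti : AntitoneOn IN (Icc 0 H) := ERealConvexOn.antitoneOn_Icc hINconv
    (Icc_subset_Icc_right hH1.le) (fun x hx ↦ hINnn x ⟨hx.1, hx.2.trans hH1.le⟩) hINH
  have hfin : Icc 0 H ⊆ {x | x ∈ Icc (0:ℝ) 1 ∧ IN x ≠ ⊤} := fun x hx ↦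
    ⟨⟨hx.1, hx.2.trans hH1.le⟩,
      ((hanti ⟨le_rfl, hH0.le⟩ hx hx.1).trans_lt (hIN0.trans_lt (EReal.coe_lt_top H))).ne⟩
  have hRH : 1 - R ∈ Ioo 0 H := ⟨by linarith, by linarith⟩
  have hIpos : 0 < IN (1 - R) := (hINnn _ ⟨hRH.1.le, by linarith⟩).lt_of_ne fun h ↦
    hRH.2.ne ((hINzero _ ⟨hRH.1.le, by linarith⟩).1 h.symm)
  refine ⟨tendsto_rateSeq_min_le hq1 hR0.le hR1.le hM hUtail (fun n ↦ .iInf (hUnmeas n)) hG hGU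
      ⟨hH0.le, hH1.le⟩ hcap hINH hLDlow,
    tendsto_rateSeq_le_min hq1 hR0.le hM hUtail hG hGU hRH hH1.le hanti
      ((hINcont _ (hfin (Ioo_subset_Icc_self hRH))).mono (Ioo_subset_Icc_self.trans hfin))
      hLDlow hLDup,
    by simpa using EReal.neg_lt_neg_iff.2 hIpos⟩

/-- Channel Coding Theorem with GRAND, beyond capacity: if
`R > 1 - H` then the error probability does not decay exponentially, while the
success probability decays exponentially with exponent `s(R) = I^N(1-R) > 0`. -/
theorem grand_channel_coding_beyond_capacity
    {Ω : Type*} [MeasurableSpace Ω] (μ : Measure Ω) [IsProbabilityMeasure μ]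
    (q : ℕ) (hq : 2 ≤ q) (R : ℝ) (hR : R ∈ Set.Ioo (0:ℝ) 1)
    (M : ℕ → ℕ) (hM : ∀ n : ℕ, M n = ⌊(q : ℝ) ^ ((n : ℝ) * R)⌋₊)
    (Un : (n : ℕ) → Fin (M n) → Ω → ℕ)
    (hUnmeas : ∀ n i, Measurable (Un n i))
    (hUnval : ∀ n i ω, Un n i ω ∈ Finset.Icc 1 (q ^ n))
    (hUnunif : ∀ n i, ∀ k ∈ Finset.Icc 1 (q ^ n), μ {ω | Un n i ω = k} = ((q : ℝ≥0∞) ^ n)⁻¹)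
    (hUnindep : ∀ n, iIndepFun (Un n) μ)
    (U : ℕ → Ω → ℕ) (hU : ∀ n ω, U n ω = ⨅ i, Un n i ω)
    (G : ℕ → Ω → ℕ) (hGmeas : ∀ n, Measurable (G n))
    (hGval : ∀ n ω, G n ω ∈ Finset.Icc 1 (q ^ n))
    (hGindep : ∀ n, IndepFun (G n) (fun ω i => Un n i ω) μ)
    (IN : ℝ → EReal) (H : ℝ) (hH : H ∈ Set.Ioo (0:ℝ) 1)
    (hINnn : ∀ x ∈ Set.Icc (0:ℝ) 1, 0 ≤ IN x)
    (hINconv : ∀ x ∈ Set.Icc (0:ℝ) 1, ∀ y ∈ Set.Icc (0:ℝ) 1, ∀ a b : ℝ,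
      0 ≤ a → 0 ≤ b → a + b = 1 →
      IN (a * x + b * y) ≤ (a : EReal) * IN x + (b : EReal) * IN y)
    (hINlsc : LowerSemicontinuousOn IN (Set.Icc 0 1))
    (hINcont : ContinuousOn IN {x | x ∈ Set.Icc (0:ℝ) 1 ∧ IN x ≠ ⊤})
    (hINzero : ∀ x ∈ Set.Icc (0:ℝ) 1, (IN x = 0 ↔ x = H))
    (hIN0 : IN 0 ≤ (H : EReal))
    (hLDlow : ∀ O : Set ℝ, IsOpen O →
      -(⨅ x ∈ O ∩ Set.Icc (0:ℝ) 1, IN x) ≤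
        Filter.liminf
          (rateSeq q (fun n => μ {ω | (n : ℝ)⁻¹ * Real.logb q ((G n ω : ℝ)) ∈ O}))
          Filter.atTop)
    (hLDup : ∀ F : Set ℝ, IsClosed F →
      Filter.limsup
          (rateSeq q (fun n => μ {ω | (n : ℝ)⁻¹ * Real.logb q ((G n ω : ℝ)) ∈ F}))
          Filter.atTop ≤
        -(⨅ x ∈ F ∩ Set.Icc (0:ℝ) 1, IN x))
    (hcap : 1 - H < R) :
    Filter.Tendsto
      (rateSeq q (fun n => μ {ω | U n ω ≤ G n ω}))
      Filter.atTop (nhds (0 : EReal)) ∧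
    Filter.Tendsto
      (rateSeq q (fun n => μ {ω | G n ω ≤ U n ω}))
      Filter.atTop (nhds (-(IN (1 - R)))) ∧
    -(IN (1 - R)) < 0 :=
  grand_channel_coding_beyond_capacity_general μ q hq R hR M hM Un hUnmeas hUnval hUnunif hUnindep U
    hU G hGval hGindep IN H hH hINnn hINconv hINcont hINzero hIN0 hLDlow hLDup hcap
end
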